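/- arXiv:1802.10324 — 4 statements merged into one kernel-verified Lean document; each statement's English description precedes it below -/
import Mathlib

section
/- Let K ≥ 1 and let ∗ denote the discrete convolution (z ∗ v)_j^k = Σ_{j₁+j₂ ≡ j mod 2K} Σ_{k₁+k₂=k} z_{j₁}^{k₁} v_{j₂}^{k₂} on sequences indexed by j ∈ {-K,...,K-1}, k ∈ ℤ. Then for σ > 1/2 there is a constant C_σ, independent of K, such that ‖z ∗ v‖_σ ≤ C_σ ‖z‖_σ ‖v‖_σ for all z, v with finite norm, where ‖z‖_σ² = Σ_j ⟨j⟩^{2σ} (Σ_k |z_j^k|)² and ⟨j⟩ = √(j²+1). -/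
open scoped BigOperators

/-- The index set 𝒦 = {-K, ..., K-1}. -/
noncomputable def Kset (K : ℕ) : Finset ℤ := Finset.Icc (-(K : ℤ)) ((K : ℤ) - 1)

/-- The weight ⟨j⟩ = √(j²+1). -/
noncomputable def wt (j : ℤ) : ℝ := Real.sqrt ((j : ℝ) ^ 2 + 1)

/-- The weighted norm ‖z‖_σ = (Σ_j ⟨j⟩^{2σ} (Σ_k |z_j^k|)²)^{1/2}. -/
noncomputable def normSigma (K : ℕ) (σ : ℝ) (z : ℤ → ℤ → ℂ) : ℝ :=
  Real.sqrt (∑ j ∈ Kset K, Real.rpow (wt j) (2 * σ) * (∑' k : ℤ, ‖z j k‖) ^ 2)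

/-- The discrete convolution (z ∗ v)_j^k = Σ_{j₁+j₂ ≡ j mod 2K} Σ_{k₁+k₂=k} z_{j₁}^{k₁} v_{j₂}^{k₂},
with j₁, j₂ running over 𝒦. -/
noncomputable def dconv (K : ℕ) (z v : ℤ → ℤ → ℂ) : ℤ → ℤ → ℂ := fun j k =>
  ∑ j₁ ∈ Kset K, ∑ j₂ ∈ Kset K,
    if (j₁ + j₂ - j) % (2 * (K : ℤ)) = 0 then ∑' k₁ : ℤ, z j₁ k₁ * v j₂ (k - k₁) else 0

/-! ### Auxiliary lemmas -/

lemma wt_pos (j : ℤ) : 0 < wt j := Real.sqrt_pos.2 (by positivity)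

lemma wt_sq (j : ℤ) : wt j ^ 2 = (j : ℝ) ^ 2 + 1 := Real.sq_sqrt (by positivity)

lemma wt_zero : wt 0 = 1 := by
  simp [wt]

lemma rpow_sq_eq {x : ℝ} (hx : 0 ≤ x) (t : ℝ) : (x ^ t) ^ (2 : ℕ) = x ^ (2 * t) := by
  rw [← Real.rpow_natCast (x ^ t) 2, ← Real.rpow_mul hx]
  norm_num [mul_comm]

lemma Kset_unique {K : ℕ} (hK : 1 ≤ K) {j j' : ℤ} (hj : j ∈ Kset K) (hj' : j' ∈ Kset K)
    (h : (2 * (K : ℤ)) ∣ (j - j')) : j = j' := by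
  simp only [Kset, Finset.mem_Icc] at hj hj'
  obtain ⟨c, hc⟩ := h
  have hK' : (1 : ℤ) ≤ K := by exact_mod_cast hK
  have h1 : c ≤ 0 := by nlinarith [hj.1, hj.2, hj'.1, hj'.2]
  have h2 : 0 ≤ c := by nlinarith [hj.1, hj.2, hj'.1, hj'.2]
  have hc0 : c = 0 := le_antisymm h1 h2
  subst hc0
  simp at hc
  omega

lemma Kset_rep_mem {K : ℕ} (hK : 1 ≤ K) (n : ℤ) :
    ((n + K) % (2 * (K : ℤ)) - K ∈ Kset K) ∧
      (2 * (K : ℤ)) ∣ (n - ((n + K) % (2 * (K : ℤ)) - K)) := by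
  have hK' : (1 : ℤ) ≤ K := by exact_mod_cast hK
  have hM : (0 : ℤ) < 2 * (K : ℤ) := by linarith
  constructor
  · simp only [Kset, Finset.mem_Icc]
    have h1 := Int.emod_nonneg (n + K) (ne_of_gt hM)
    have h2 := Int.emod_lt_of_pos (n + K) hM
    omega
  · refine ⟨(n + K) / (2 * (K : ℤ)), ?_⟩
    have h3 := Int.mul_ediv_add_emod (n + K) (2 * (K : ℤ))
    linarith

lemma Kset_sum_ite {K : ℕ} (hK : 1 ≤ K) (n : ℤ) (X : ℝ) :
    (∑ j ∈ Kset K, if (n - j) % (2 * (K : ℤ)) = 0 then X else 0) = X := by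
  obtain ⟨hmem, hdvd⟩ := Kset_rep_mem hK n
  rw [Finset.sum_eq_single_of_mem _ hmem]
  · rw [if_pos (Int.emod_eq_zero_of_dvd hdvd)]
  · intro b hb hne
    rw [if_neg]
    intro hcon
    apply hne
    refine Kset_unique hK hb hmem ?_
    have d1 := Int.dvd_of_emod_eq_zero hcon
    obtain ⟨c1, e1⟩ := hdvd
    obtain ⟨c2, e2⟩ := d1
    exact ⟨c1 - c2, by linear_combination e1 - e2⟩

/-- Key weight inequality: if j ≡ j₁ + j₂ mod 2K with all three in 𝒦,
then ⟨j⟩^σ ≤ 2^σ (⟨j₁⟩^σ + ⟨j₂⟩^σ). -/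
lemma wt_conv {K : ℕ} (hK : 1 ≤ K) {σ : ℝ} (hσ : 0 ≤ σ) {j j₁ j₂ : ℤ}
    (hj : j ∈ Kset K) (hj₁ : j₁ ∈ Kset K) (hj₂ : j₂ ∈ Kset K)
    (h : (j₁ + j₂ - j) % (2 * (K : ℤ)) = 0) :
    wt j ^ σ ≤ (2 : ℝ) ^ σ * (wt j₁ ^ σ + wt j₂ ^ σ) := by
  have habs : |j| ≤ |j₁| + |j₂| := by
    obtain ⟨c, hc⟩ := Int.dvd_of_emod_eq_zero h
    simp only [Kset, Finset.mem_Icc] at hj hj₁ hj₂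
    have hK' : (1 : ℤ) ≤ K := by exact_mod_cast hK
    have h1 : c ≤ 1 := by nlinarith [hj.1, hj.2, hj₁.1, hj₁.2, hj₂.1, hj₂.2]
    have h2 : -1 ≤ c := by nlinarith [hj.1, hj.2, hj₁.1, hj₁.2, hj₂.1, hj₂.2]
    have hc' : c = -1 ∨ c = 0 ∨ c = 1 := by omega
    rcases abs_cases j with ⟨e, _⟩ | ⟨e, _⟩ <;> rcases abs_cases j₁ with ⟨e1, _⟩ | ⟨e1, _⟩ <;>
      rcases abs_cases j₂ with ⟨e2, _⟩ | ⟨e2, _⟩ <;> rw [e, e1, e2] <;>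
      rcases hc' with rfl | rfl | rfl <;> omega
  have hsq : (j : ℝ) ^ 2 ≤ 2 * (j₁ : ℝ) ^ 2 + 2 * (j₂ : ℝ) ^ 2 := by
    have h1 : j ^ 2 ≤ 2 * j₁ ^ 2 + 2 * j₂ ^ 2 := by
      have h2 : j ^ 2 ≤ (|j₁| + |j₂|) ^ 2 := by
        rw [← sq_abs j]
        exact pow_le_pow_left₀ (abs_nonneg j) habs 2
      nlinarith [sq_abs j₁, sq_abs j₂, abs_nonneg j₁, abs_nonneg j₂, sq_nonneg (|j₁| - |j₂|)]
    exact_mod_cast h1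
  have key : ∀ w : ℤ, (j : ℝ) ^ 2 + 1 ≤ 4 * ((w : ℝ) ^ 2 + 1) → wt j ≤ 2 * wt w := by
    intro w hw
    have h4 : Real.sqrt 4 = 2 := by
      rw [show (4 : ℝ) = 2 ^ 2 by norm_num, Real.sqrt_sq (by norm_num)]
    have := Real.sqrt_le_sqrt hw
    rwa [Real.sqrt_mul (by norm_num) _, h4] at this
  have hmax : wt j ≤ 2 * max (wt j₁) (wt j₂) := by
    rcases le_total (wt j₁) (wt j₂) with hw | hw
    · have hww : (j₁ : ℝ) ^ 2 ≤ (j₂ : ℝ) ^ 2 := by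
        have := pow_le_pow_left₀ (wt_pos j₁).le hw 2
        rw [wt_sq, wt_sq] at this; linarith
      rw [max_eq_right hw]
      exact key j₂ (by nlinarith)
    · have hww : (j₂ : ℝ) ^ 2 ≤ (j₁ : ℝ) ^ 2 := by
        have := pow_le_pow_left₀ (wt_pos j₂).le hw 2
        rw [wt_sq, wt_sq] at this; linarith
      rw [max_eq_left hw]
      exact key j₁ (by nlinarith)
  have hmax0 : (0 : ℝ) ≤ max (wt j₁) (wt j₂) := le_trans (wt_pos j₁).le (le_max_left _ _)
  calc wt j ^ σ ≤ (2 * max (wt j₁) (wt j₂)) ^ σ :=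
        Real.rpow_le_rpow (wt_pos j).le hmax hσ
    _ = (2 : ℝ) ^ σ * (max (wt j₁) (wt j₂)) ^ σ := Real.mul_rpow (by norm_num) hmax0
    _ ≤ (2 : ℝ) ^ σ * (wt j₁ ^ σ + wt j₂ ^ σ) := by
        refine mul_le_mul_of_nonneg_left ?_ (Real.rpow_nonneg (by norm_num) σ)
        rcases max_cases (wt j₁) (wt j₂) with ⟨hm, _⟩ | ⟨hm, _⟩ <;> rw [hm]
        · exact le_add_of_nonneg_right (Real.rpow_nonneg (wt_pos j₂).le σ)
        · exact le_add_of_nonneg_left (Real.rpow_nonneg (wt_pos j₁).le σ)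

/-- The set of pairs contributing to the convolution at frequency j. -/
noncomputable def Pset (K : ℕ) (j : ℤ) : Finset (ℤ × ℤ) :=
  (Kset K ×ˢ Kset K).filter (fun p => (p.1 + p.2 - j) % (2 * (K : ℤ)) = 0)

lemma Pset_mem' {K : ℕ} {j : ℤ} {p : ℤ × ℤ} :
    p ∈ Pset K j ↔ p.1 ∈ Kset K ∧ p.2 ∈ Kset K ∧ (p.1 + p.2 - j) % (2 * (K : ℤ)) = 0 := by
  simp [Pset, Finset.mem_filter, Finset.mem_product, and_assoc]

lemma Pset_sum_comm {K : ℕ} (hK : 1 ≤ K) (F : ℤ × ℤ → ℝ) :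
    ∑ j ∈ Kset K, ∑ p ∈ Pset K j, F p = ∑ p ∈ Kset K ×ˢ Kset K, F p := by
  simp only [Pset, Finset.sum_filter]
  rw [Finset.sum_comm]
  exact Finset.sum_congr rfl fun p _ => Kset_sum_ite hK (p.1 + p.2) (F p)

lemma Pset_snd_le {K : ℕ} (hK : 1 ≤ K) (j : ℤ) (y : ℤ → ℝ) (hy : ∀ i, 0 ≤ y i) :
    ∑ p ∈ Pset K j, y p.2 ≤ ∑ i ∈ Kset K, y i := by
  have hinj : ∀ p ∈ Pset K j, ∀ q ∈ Pset K j, p.2 = q.2 → p = q := by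
    intro p hp q hq hpq
    rw [Pset_mem'] at hp hq
    obtain ⟨c1, e1⟩ := Int.dvd_of_emod_eq_zero hp.2.2
    obtain ⟨c2, e2⟩ := Int.dvd_of_emod_eq_zero hq.2.2
    have hd : (2 * (K : ℤ)) ∣ (p.1 - q.1) :=
      ⟨c1 - c2, by linear_combination e1 - e2 - hpq⟩
    exact Prod.ext_iff.2 ⟨Kset_unique hK hp.1 hq.1 hd, hpq⟩
  calc ∑ p ∈ Pset K j, y p.2 = ∑ i ∈ (Pset K j).image Prod.snd, y i :=
        (Finset.sum_image hinj).symm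
    _ ≤ ∑ i ∈ Kset K, y i := by
        refine Finset.sum_le_sum_of_subset_of_nonneg ?_ (fun i _ _ => hy i)
        intro i hi
        obtain ⟨p, hp, rfl⟩ := Finset.mem_image.1 hi
        exact (Pset_mem'.1 hp).2.1

lemma Pset_swap (K : ℕ) (j : ℤ) (f : ℤ × ℤ → ℝ) :
    ∑ p ∈ Pset K j, f p = ∑ p ∈ Pset K j, f p.swap := by
  refine Finset.sum_equiv (Equiv.prodComm ℤ ℤ) (fun p => ?_) (fun p _ => rfl)
  constructor <;> intro hp <;> rw [Pset_mem'] at hp ⊢ <;>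
    exact ⟨hp.2.1, hp.1, by rw [add_comm]; exact hp.2.2⟩

/-- Discrete Young inequality on 𝒦 (ℓ² * ℓ¹ → ℓ² form, squared). -/
lemma young {K : ℕ} (hK : 1 ≤ K) (x y : ℤ → ℝ) (hx : ∀ i, 0 ≤ x i) (hy : ∀ i, 0 ≤ y i) :
    ∑ j ∈ Kset K, (∑ p ∈ Pset K j, x p.1 * y p.2) ^ 2 ≤
      (∑ i ∈ Kset K, (x i) ^ 2) * (∑ i ∈ Kset K, y i) ^ 2 := by
  have hstep : ∀ j : ℤ, (∑ p ∈ Pset K j, x p.1 * y p.2) ^ 2 ≤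
      (∑ p ∈ Pset K j, (x p.1) ^ 2 * y p.2) * (∑ i ∈ Kset K, y i) := by
    intro j
    have hcs := Finset.sum_mul_sq_le_sq_mul_sq (Pset K j)
      (fun p => x p.1 * Real.sqrt (y p.2)) (fun p => Real.sqrt (y p.2))
    have e1 : ∑ p ∈ Pset K j, (x p.1 * Real.sqrt (y p.2)) * Real.sqrt (y p.2)
        = ∑ p ∈ Pset K j, x p.1 * y p.2 :=
      Finset.sum_congr rfl fun p _ => by rw [mul_assoc, Real.mul_self_sqrt (hy _)]
    have e2 : ∑ p ∈ Pset K j, (x p.1 * Real.sqrt (y p.2)) ^ 2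
        = ∑ p ∈ Pset K j, (x p.1) ^ 2 * y p.2 :=
      Finset.sum_congr rfl fun p _ => by rw [mul_pow, Real.sq_sqrt (hy _)]
    have e3 : ∑ p ∈ Pset K j, (Real.sqrt (y p.2)) ^ 2 = ∑ p ∈ Pset K j, y p.2 :=
      Finset.sum_congr rfl fun p _ => Real.sq_sqrt (hy _)
    rw [e1, e2, e3] at hcs
    refine le_trans hcs ?_
    refine mul_le_mul_of_nonneg_left (Pset_snd_le hK j y hy) ?_
    exact Finset.sum_nonneg fun p _ => mul_nonneg (sq_nonneg _) (hy _)
  calc ∑ j ∈ Kset K, (∑ p ∈ Pset K j, x p.1 * y p.2) ^ 2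
      ≤ ∑ j ∈ Kset K, (∑ p ∈ Pset K j, (x p.1) ^ 2 * y p.2) * (∑ i ∈ Kset K, y i) :=
        Finset.sum_le_sum fun j _ => hstep j
    _ = (∑ j ∈ Kset K, ∑ p ∈ Pset K j, (x p.1) ^ 2 * y p.2) * (∑ i ∈ Kset K, y i) :=
        (Finset.sum_mul _ _ _).symm
    _ = (∑ p ∈ Kset K ×ˢ Kset K, (x p.1) ^ 2 * y p.2) * (∑ i ∈ Kset K, y i) := by
        rw [Pset_sum_comm hK]
    _ = ((∑ i ∈ Kset K, (x i) ^ 2) * (∑ i ∈ Kset K, y i)) * (∑ i ∈ Kset K, y i) := by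
        congr 1
        rw [Finset.sum_product, Finset.sum_mul_sum]
    _ = (∑ i ∈ Kset K, (x i) ^ 2) * (∑ i ∈ Kset K, y i) ^ 2 := by ring

/-- Summability of the weight series. -/
lemma wt_summable {σ : ℝ} (hσ : 1 / 2 < σ) : Summable (fun j : ℤ => wt j ^ (-(2 * σ))) := by
  have h2σ : 1 < 2 * σ := by linarith
  have hbase : Summable (fun j : ℤ => (if j = 0 then (1 : ℝ) else 0) + |(j : ℝ)| ^ (-(2 * σ))) :=
    ((hasSum_ite_eq (0 : ℤ) (1 : ℝ)).summable).add (Real.summable_abs_int_rpow h2σ)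
  refine Summable.of_nonneg_of_le (fun j => Real.rpow_nonneg (wt_pos j).le _) ?_ hbase
  intro j
  by_cases hj : j = 0
  · subst hj
    rw [wt_zero, Real.one_rpow, if_pos rfl]
    have : (0 : ℝ) ≤ |((0 : ℤ) : ℝ)| ^ (-(2 * σ)) := Real.rpow_nonneg (abs_nonneg _) _
    linarith
  · have h0 : (0 : ℝ) < |(j : ℝ)| := abs_pos.2 (Int.cast_ne_zero.2 hj)
    have h1 : |(j : ℝ)| ≤ wt j := by
      rw [show |(j : ℝ)| = Real.sqrt ((j : ℝ) ^ 2) by rw [Real.sqrt_sq_eq_abs]]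
      exact Real.sqrt_le_sqrt (by linarith)
    have h2 := Real.rpow_le_rpow_of_nonpos h0 h1 (by linarith : -(2 * σ) ≤ 0)
    rw [if_neg hj, zero_add]
    exact h2

def eshift : ℤ × ℤ ≃ ℤ × ℤ where
  toFun p := (p.2, p.1 - p.2)
  invFun q := (q.1 + q.2, q.1)
  left_inv p := by ext <;> simp
  right_inv q := by ext <;> simp

/-- The k-convolution facts for a pair of absolutely summable sequences. -/
lemma kconv (f g : ℤ → ℂ) (hf : Summable fun k : ℤ => ‖f k‖)
    (hg : Summable fun k : ℤ => ‖g k‖) :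
    Summable (fun k : ℤ => ∑' k₁ : ℤ, ‖f k₁‖ * ‖g (k - k₁)‖) ∧
    (∑' k : ℤ, ∑' k₁ : ℤ, ‖f k₁‖ * ‖g (k - k₁)‖)
      = (∑' k : ℤ, ‖f k‖) * (∑' k : ℤ, ‖g k‖) ∧
    ∀ k : ℤ, ‖∑' k₁ : ℤ, f k₁ * g (k - k₁)‖
      ≤ ∑' k₁ : ℤ, ‖f k₁‖ * ‖g (k - k₁)‖ := by
  have base : Summable (fun p : ℤ × ℤ => ‖f p.1‖ * ‖g p.2‖) :=
    hf.mul_of_nonneg hg (fun _ => norm_nonneg _) (fun _ => norm_nonneg _)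
  have H : Summable (fun p : ℤ × ℤ => ‖f p.2‖ * ‖g (p.1 - p.2)‖) := by
    have h := eshift.summable_iff.mpr base
    exact h.congr fun p => rfl
  refine ⟨H.prod, ?_, ?_⟩
  · have h2 : (∑' p : ℤ × ℤ, ‖f p.2‖ * ‖g (p.1 - p.2)‖)
        = ∑' p : ℤ × ℤ, ‖f p.1‖ * ‖g p.2‖ :=
      eshift.tsum_eq (fun p : ℤ × ℤ => ‖f p.1‖ * ‖g p.2‖)
    calc (∑' k : ℤ, ∑' k₁ : ℤ, ‖f k₁‖ * ‖g (k - k₁)‖)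
        = ∑' p : ℤ × ℤ, ‖f p.2‖ * ‖g (p.1 - p.2)‖ := (Summable.tsum_prod H).symm
      _ = ∑' p : ℤ × ℤ, ‖f p.1‖ * ‖g p.2‖ := h2
      _ = (∑' k : ℤ, ‖f k‖) * (∑' k : ℤ, ‖g k‖) :=
          (Summable.tsum_mul_tsum hf hg base).symm
  · intro k
    have hs : Summable (fun k₁ : ℤ => ‖f k₁ * g (k - k₁)‖) := by
      have := H.prod_factor k
      simpa [norm_mul] using this
    calc ‖∑' k₁ : ℤ, f k₁ * g (k - k₁)‖
        ≤ ∑' k₁ : ℤ, ‖f k₁ * g (k - k₁)‖ := by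
          exact norm_tsum_le_tsum_norm hs
      _ = ∑' k₁ : ℤ, ‖f k₁‖ * ‖g (k - k₁)‖ := by
          simp [norm_mul]

lemma dconv_eq (K : ℕ) (z v : ℤ → ℤ → ℂ) (j k : ℤ) :
    dconv K z v j k = ∑ p ∈ Pset K j, ∑' k₁ : ℤ, z p.1 k₁ * v p.2 (k - k₁) := by
  rw [Pset, Finset.sum_filter, Finset.sum_product]
  rfl

/-- The convolution reduction in k: the ℓ¹-in-k norm of the convolution is bounded by the
convolution of ℓ¹-in-k norms. -/
lemma conv_bound {K : ℕ} (z v : ℤ → ℤ → ℂ)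
    (hz : ∀ j, Summable (fun k : ℤ => ‖z j k‖))
    (hv : ∀ j, Summable (fun k : ℤ => ‖v j k‖)) (j : ℤ) :
    (∑' k : ℤ, ‖dconv K z v j k‖) ≤
      ∑ p ∈ Pset K j, (∑' k : ℤ, ‖z p.1 k‖) * (∑' k : ℤ, ‖v p.2 k‖) := by
  have hG := fun (j₁ j₂ : ℤ) => kconv (z j₁) (v j₂) (hz j₁) (hv j₂)
  have hFsumm : Summable (fun k : ℤ => ∑ p ∈ Pset K j,
      ∑' k₁ : ℤ, ‖z p.1 k₁‖ * ‖v p.2 (k - k₁)‖) :=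
    summable_sum fun p _ => (hG p.1 p.2).1
  have hpt : ∀ k : ℤ, ‖dconv K z v j k‖ ≤
      ∑ p ∈ Pset K j, ∑' k₁ : ℤ, ‖z p.1 k₁‖ * ‖v p.2 (k - k₁)‖ := by
    intro k
    rw [dconv_eq]
    exact le_trans (norm_sum_le _ _)
      (Finset.sum_le_sum fun p _ => (hG p.1 p.2).2.2 k)
  have hsummc : Summable (fun k : ℤ => ‖dconv K z v j k‖) :=
    Summable.of_nonneg_of_le (fun k => norm_nonneg _) hpt hFsumm
  calc (∑' k : ℤ, ‖dconv K z v j k‖)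
      ≤ ∑' k : ℤ, ∑ p ∈ Pset K j,
          ∑' k₁ : ℤ, ‖z p.1 k₁‖ * ‖v p.2 (k - k₁)‖ :=
        Summable.tsum_le_tsum hpt hsummc hFsumm
    _ = ∑ p ∈ Pset K j, ∑' k : ℤ,
          ∑' k₁ : ℤ, ‖z p.1 k₁‖ * ‖v p.2 (k - k₁)‖ :=
        Summable.tsum_finsetSum fun p _ => (hG p.1 p.2).1
    _ = ∑ p ∈ Pset K j, (∑' k : ℤ, ‖z p.1 k‖) * (∑' k : ℤ, ‖v p.2 k‖) :=
        Finset.sum_congr rfl fun p _ => (hG p.1 p.2).2.1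

set_option maxHeartbeats 1000000 in
/-- Algebra property (eq-algebra): for σ > 1/2 there is a constant C_σ, independent of K,
with ‖z ∗ v‖_σ ≤ C_σ ‖z‖_σ ‖v‖_σ. -/
theorem stmt_3 (σ : ℝ) (hσ : 1 / 2 < σ) :
    ∃ C : ℝ, 0 < C ∧ ∀ K : ℕ, 1 ≤ K → ∀ z v : ℤ → ℤ → ℂ,
      (∀ j, Summable (fun k : ℤ => ‖z j k‖)) →
      (∀ j, Summable (fun k : ℤ => ‖v j k‖)) →
      normSigma K σ (dconv K z v) ≤ C * normSigma K σ z * normSigma K σ v := by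
  have hσ0 : (0 : ℝ) < σ := by linarith
  have hSsum := wt_summable hσ
  set S : ℝ := ∑' j : ℤ, wt j ^ (-(2 * σ)) with hS_def
  have hS1 : (1 : ℝ) ≤ S := by
    have h0 : wt (0 : ℤ) ^ (-(2 * σ)) = 1 := by rw [wt_zero, Real.one_rpow]
    calc (1 : ℝ) = wt (0 : ℤ) ^ (-(2 * σ)) := h0.symm
      _ ≤ S := Summable.le_tsum hSsum 0 fun j _ => Real.rpow_nonneg (wt_pos j).le _
  have hSpos : (0 : ℝ) < S := lt_of_lt_of_le one_pos hS1
  have h2σpos : (0 : ℝ) < (2 : ℝ) ^ σ := Real.rpow_pos_of_pos (by norm_num) σ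
  refine ⟨2 * (2 : ℝ) ^ σ * Real.sqrt S, by positivity, ?_⟩
  intro K hK z v hz hv
  set a : ℤ → ℝ := fun j => ∑' k : ℤ, ‖z j k‖ with ha
  set b : ℤ → ℝ := fun j => ∑' k : ℤ, ‖v j k‖ with hb
  set c : ℤ → ℝ := fun j => ∑' k : ℤ, ‖dconv K z v j k‖ with hc
  have ha0 : ∀ j, 0 ≤ a j := fun j => tsum_nonneg fun k => norm_nonneg _
  have hb0 : ∀ j, 0 ≤ b j := fun j => tsum_nonneg fun k => norm_nonneg _
  have hc0 : ∀ j, 0 ≤ c j := fun j => tsum_nonneg fun k => norm_nonneg _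
  set QA : ℝ := ∑ j ∈ Kset K, wt j ^ (2 * σ) * (a j) ^ 2 with hQA
  set QB : ℝ := ∑ j ∈ Kset K, wt j ^ (2 * σ) * (b j) ^ 2 with hQB
  have hQA0 : 0 ≤ QA := Finset.sum_nonneg fun j _ =>
    mul_nonneg (Real.rpow_nonneg (wt_pos j).le _) (sq_nonneg _)
  have hQB0 : 0 ≤ QB := Finset.sum_nonneg fun j _ =>
    mul_nonneg (Real.rpow_nonneg (wt_pos j).le _) (sq_nonneg _)
  -- the ℓ¹ bounds
  have hl1 : ∀ (y : ℤ → ℝ), (∀ i, 0 ≤ y i) →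
      (∑ i ∈ Kset K, y i) ^ 2 ≤ S * ∑ j ∈ Kset K, wt j ^ (2 * σ) * (y j) ^ 2 := by
    intro y hy
    have hcs := Finset.sum_mul_sq_le_sq_mul_sq (Kset K)
      (fun j => wt j ^ (-σ)) (fun j => wt j ^ σ * y j)
    have e : ∑ j ∈ Kset K, wt j ^ (-σ) * (wt j ^ σ * y j) = ∑ i ∈ Kset K, y i := by
      refine Finset.sum_congr rfl fun j _ => ?_
      rw [← mul_assoc, ← Real.rpow_add (wt_pos j)]
      simp
    have e2 : ∑ j ∈ Kset K, (wt j ^ (-σ)) ^ 2 = ∑ j ∈ Kset K, wt j ^ (-(2 * σ)) := by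
      refine Finset.sum_congr rfl fun j _ => ?_
      rw [rpow_sq_eq (wt_pos j).le, show (2 : ℝ) * -σ = -(2 * σ) by ring]
    have e3 : ∑ j ∈ Kset K, (wt j ^ σ * y j) ^ 2
        = ∑ j ∈ Kset K, wt j ^ (2 * σ) * (y j) ^ 2 := by
      refine Finset.sum_congr rfl fun j _ => ?_
      rw [mul_pow, rpow_sq_eq (wt_pos j).le]
    rw [e, e2, e3] at hcs
    refine le_trans hcs ?_
    refine mul_le_mul_of_nonneg_right ?_ (Finset.sum_nonneg fun j _ =>
      mul_nonneg (Real.rpow_nonneg (wt_pos j).le _) (sq_nonneg _))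
    exact Summable.sum_le_tsum (Kset K) (fun j _ => Real.rpow_nonneg (wt_pos j).le _) hSsum
  -- main estimate per j
  have hTj : ∀ j ∈ Kset K, wt j ^ (2 * σ) * (∑ p ∈ Pset K j, a p.1 * b p.2) ^ 2 ≤
      2 * ((2 : ℝ) ^ σ) ^ 2 *
        ((∑ p ∈ Pset K j, (wt p.1 ^ σ * a p.1) * b p.2) ^ 2 +
          (∑ p ∈ Pset K j, a p.1 * (wt p.2 ^ σ * b p.2)) ^ 2) := by
    intro j hj
    set U : ℝ := ∑ p ∈ Pset K j, (wt p.1 ^ σ * a p.1) * b p.2 with hU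
    set W : ℝ := ∑ p ∈ Pset K j, a p.1 * (wt p.2 ^ σ * b p.2) with hW
    have hU0 : 0 ≤ U := Finset.sum_nonneg fun p _ =>
      mul_nonneg (mul_nonneg (Real.rpow_nonneg (wt_pos _).le _) (ha0 _)) (hb0 _)
    have hW0 : 0 ≤ W := Finset.sum_nonneg fun p _ =>
      mul_nonneg (ha0 _) (mul_nonneg (Real.rpow_nonneg (wt_pos _).le _) (hb0 _))
    have h1 : wt j ^ σ * (∑ p ∈ Pset K j, a p.1 * b p.2) ≤ (2 : ℝ) ^ σ * (U + W) := by
      rw [Finset.mul_sum]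
      have step : ∀ p ∈ Pset K j, wt j ^ σ * (a p.1 * b p.2) ≤
          ((2 : ℝ) ^ σ * (wt p.1 ^ σ + wt p.2 ^ σ)) * (a p.1 * b p.2) := by
        intro p hp
        rw [Pset_mem'] at hp
        exact mul_le_mul_of_nonneg_right (wt_conv hK hσ0.le hj hp.1 hp.2.1 hp.2.2)
          (mul_nonneg (ha0 _) (hb0 _))
      refine le_trans (Finset.sum_le_sum step) (le_of_eq ?_)
      rw [hU, hW, mul_add, Finset.mul_sum, Finset.mul_sum, ← Finset.sum_add_distrib]
      exact Finset.sum_congr rfl fun p _ => by ring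
    have hT0 : 0 ≤ ∑ p ∈ Pset K j, a p.1 * b p.2 :=
      Finset.sum_nonneg fun p _ => mul_nonneg (ha0 _) (hb0 _)
    have hwσ : 0 ≤ wt j ^ σ := Real.rpow_nonneg (wt_pos j).le _
    have h2 : (wt j ^ σ * (∑ p ∈ Pset K j, a p.1 * b p.2)) ^ 2 ≤
        ((2 : ℝ) ^ σ * (U + W)) ^ 2 :=
      pow_le_pow_left₀ (mul_nonneg hwσ hT0) h1 2
    have h3 : wt j ^ (2 * σ) * (∑ p ∈ Pset K j, a p.1 * b p.2) ^ 2 =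
        (wt j ^ σ * (∑ p ∈ Pset K j, a p.1 * b p.2)) ^ 2 := by
      rw [mul_pow, rpow_sq_eq (wt_pos j).le]
    rw [h3]
    refine le_trans h2 ?_
    have : ((2 : ℝ) ^ σ * (U + W)) ^ 2 = ((2 : ℝ) ^ σ) ^ 2 * (U + W) ^ 2 := by ring
    rw [this]
    nlinarith [sq_nonneg (U - W), sq_nonneg ((2 : ℝ) ^ σ)]
  -- sum up
  have hmain : ∑ j ∈ Kset K, wt j ^ (2 * σ) * (c j) ^ 2 ≤
      4 * ((2 : ℝ) ^ σ) ^ 2 * S * (QA * QB) := by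
    have hcT : ∀ j, c j ≤ ∑ p ∈ Pset K j, a p.1 * b p.2 := fun j =>
      conv_bound z v hz hv j
    have hstep1 : ∑ j ∈ Kset K, wt j ^ (2 * σ) * (c j) ^ 2 ≤
        ∑ j ∈ Kset K, wt j ^ (2 * σ) * (∑ p ∈ Pset K j, a p.1 * b p.2) ^ 2 := by
      refine Finset.sum_le_sum fun j _ => ?_
      refine mul_le_mul_of_nonneg_left ?_ (Real.rpow_nonneg (wt_pos j).le _)
      exact pow_le_pow_left₀ (hc0 j) (hcT j) 2
    have hstep2 : ∑ j ∈ Kset K, wt j ^ (2 * σ) * (∑ p ∈ Pset K j, a p.1 * b p.2) ^ 2 ≤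
        2 * ((2 : ℝ) ^ σ) ^ 2 *
          ((∑ j ∈ Kset K, (∑ p ∈ Pset K j, (wt p.1 ^ σ * a p.1) * b p.2) ^ 2) +
            (∑ j ∈ Kset K, (∑ p ∈ Pset K j, a p.1 * (wt p.2 ^ σ * b p.2)) ^ 2)) := by
      rw [mul_add, Finset.mul_sum, Finset.mul_sum, ← Finset.sum_add_distrib]
      refine le_trans (Finset.sum_le_sum hTj) (le_of_eq ?_)
      exact Finset.sum_congr rfl fun j _ => by ring
    have hyoungU : ∑ j ∈ Kset K, (∑ p ∈ Pset K j, (wt p.1 ^ σ * a p.1) * b p.2) ^ 2 ≤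
        QA * (∑ i ∈ Kset K, b i) ^ 2 := by
      have := young hK (fun i => wt i ^ σ * a i) b
        (fun i => mul_nonneg (Real.rpow_nonneg (wt_pos i).le _) (ha0 i)) hb0
      refine le_trans this (le_of_eq ?_)
      congr 1
      refine Finset.sum_congr rfl fun i _ => ?_
      rw [mul_pow, rpow_sq_eq (wt_pos i).le]
    have hyoungW : ∑ j ∈ Kset K, (∑ p ∈ Pset K j, a p.1 * (wt p.2 ^ σ * b p.2)) ^ 2 ≤
        QB * (∑ i ∈ Kset K, a i) ^ 2 := by
      have hswap : ∀ j : ℤ, ∑ p ∈ Pset K j, a p.1 * (wt p.2 ^ σ * b p.2)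
          = ∑ p ∈ Pset K j, (wt p.1 ^ σ * b p.1) * a p.2 := by
        intro j
        rw [Pset_swap K j (fun p => a p.1 * (wt p.2 ^ σ * b p.2))]
        exact Finset.sum_congr rfl fun p _ => by simp only [Prod.fst_swap, Prod.snd_swap]; ring
      have := young hK (fun i => wt i ^ σ * b i) a
        (fun i => mul_nonneg (Real.rpow_nonneg (wt_pos i).le _) (hb0 i)) ha0
      simp only [hswap]
      refine le_trans this (le_of_eq ?_)
      congr 1
      refine Finset.sum_congr rfl fun i _ => ?_
      rw [mul_pow, rpow_sq_eq (wt_pos i).le]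
    have hb1 : (∑ i ∈ Kset K, b i) ^ 2 ≤ S * QB := hl1 b hb0
    have ha1 : (∑ i ∈ Kset K, a i) ^ 2 ≤ S * QA := hl1 a ha0
    have hchain : ∑ j ∈ Kset K, wt j ^ (2 * σ) * (c j) ^ 2 ≤
        2 * ((2 : ℝ) ^ σ) ^ 2 * (QA * (S * QB) + QB * (S * QA)) := by
      refine le_trans (le_trans hstep1 hstep2) ?_
      have hsq2 : (0 : ℝ) ≤ 2 * ((2 : ℝ) ^ σ) ^ 2 := by positivity
      refine mul_le_mul_of_nonneg_left ?_ hsq2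
      have t1 : ∑ j ∈ Kset K, (∑ p ∈ Pset K j, (wt p.1 ^ σ * a p.1) * b p.2) ^ 2 ≤
          QA * (S * QB) := le_trans hyoungU (mul_le_mul_of_nonneg_left hb1 hQA0)
      have t2 : ∑ j ∈ Kset K, (∑ p ∈ Pset K j, a p.1 * (wt p.2 ^ σ * b p.2)) ^ 2 ≤
          QB * (S * QA) := le_trans hyoungW (mul_le_mul_of_nonneg_left ha1 hQB0)
      linarith
    refine le_trans hchain (le_of_eq ?_)
    ring
  -- conclude
  have hNA : normSigma K σ z = Real.sqrt QA := rfl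
  have hNB : normSigma K σ v = Real.sqrt QB := rfl
  have hNC : normSigma K σ (dconv K z v) =
      Real.sqrt (∑ j ∈ Kset K, wt j ^ (2 * σ) * (c j) ^ 2) := rfl
  rw [hNA, hNB, hNC]
  set R : ℝ := 2 * (2 : ℝ) ^ σ * Real.sqrt S * Real.sqrt QA * Real.sqrt QB with hR
  have hR0 : 0 ≤ R := mul_nonneg (mul_nonneg (mul_nonneg (by positivity) (Real.sqrt_nonneg S)) (Real.sqrt_nonneg QA)) (Real.sqrt_nonneg QB)
  have hR2 : R ^ 2 = 4 * ((2 : ℝ) ^ σ) ^ 2 * S * (QA * QB) := by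
    have e1 : Real.sqrt S ^ 2 = S := Real.sq_sqrt hSpos.le
    have e2 : Real.sqrt QA ^ 2 = QA := Real.sq_sqrt hQA0
    have e3 : Real.sqrt QB ^ 2 = QB := Real.sq_sqrt hQB0
    have e4 : R ^ 2 = (2 * (2 : ℝ) ^ σ) ^ 2 * (Real.sqrt S ^ 2) *
        (Real.sqrt QA ^ 2) * (Real.sqrt QB ^ 2) := by rw [hR]; ring
    rw [e4, e1, e2, e3]; ring
  calc Real.sqrt (∑ j ∈ Kset K, wt j ^ (2 * σ) * (c j) ^ 2)
      ≤ Real.sqrt (R ^ 2) := Real.sqrt_le_sqrt (by rw [hR2]; exact hmain)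
    _ = R := Real.sqrt_sq hR0
end

section
/- Let H¹(𝕋) be the Sobolev space of 2π-periodic functions with norm ‖η‖₁² = Σ_{j∈ℤ} (j²+1)|η_j|². Let Q^K denote trigonometric interpolation onto trigonometric polynomials of degree K, and assume there is C > 0 with ‖Q^K(uv)‖₁ ≤ C‖u‖₁‖v‖₁. For a trigonometric polynomial η of degree K, define φ_B^α(η) = Q^K(e^{-iα|η|²} η). Then ‖φ_B^α(η)‖₁ ≤ exp(C² ‖η‖₁² |α|) · ‖η‖₁. -/
open scoped BigOperators

/-- Fourier coefficients of the trigonometric interpolation Q^K(uv) of a product of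
trigonometric polynomials of degree K (aliased convolution modulo 2K). -/
noncomputable def mulK (K : ℕ) (u v : ℤ → ℂ) : ℤ → ℂ := fun j =>
  if j ∈ Kset K then
    ∑ j₁ ∈ Kset K, ∑ j₂ ∈ Kset K,
      if (j₁ + j₂ - j) % (2 * (K : ℤ)) = 0 then u j₁ * v j₂ else 0
  else 0

/-- Fourier coefficients of the complex conjugate η̄ (with index K aliased to -K). -/
noncomputable def starK (K : ℕ) (u : ℤ → ℂ) : ℤ → ℂ := fun j =>
  (starRingEnd ℂ) (u (if -j = (K : ℤ) then -(K : ℤ) else -j))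

/-- The iterated products Q^K(|η|^{2m} η): B₀ = η, B_{m+1} = Q^K(Q^K(B_m η) η̄). -/
noncomputable def Bpow (K : ℕ) (η : ℤ → ℂ) : ℕ → (ℤ → ℂ)
  | 0 => η
  | m + 1 => mulK K (mulK K (Bpow K η m) η) (starK K η)

/-- The H¹(𝕋) norm ‖η‖₁² = Σ_j (j²+1)|η_j|² of a trigonometric polynomial of degree K. -/
noncomputable def normH1 (K : ℕ) (u : ℤ → ℂ) : ℝ :=
  Real.sqrt (∑ j ∈ Kset K, ((j : ℝ) ^ 2 + 1) * ‖u j‖ ^ 2)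

/-- The nonlinear flow φ_B^α(η) = Q^K(e^{-iα|η|²}η) = Σ_m ((-iα)^m/m!) Q^K(|η|^{2m}η),
in Fourier coefficients. -/
noncomputable def phiB (K : ℕ) (α : ℝ) (η : ℤ → ℂ) : ℤ → ℂ := fun j =>
  ∑' m : ℕ, ((-Complex.I * (α : ℂ)) ^ m / (m.factorial : ℂ)) * Bpow K η m j

/-! ### Auxiliary material -/

/-- Embedding of the Fourier coefficients restricted to `Kset K`, with weights
`√(j²+1)`, into a finite-dimensional Euclidean space. -/
noncomputable def emb (K : ℕ) : (ℤ → ℂ) →ₗ[ℂ] EuclideanSpace ℂ (Kset K) where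
  toFun u := WithLp.toLp 2 (fun j => (Real.sqrt (((j : ℤ) : ℝ) ^ 2 + 1) : ℂ) * u j)
  map_add' u v := by ext j; simp [mul_add]
  map_smul' c u := by ext j; simp; ring

lemma emb_apply (K : ℕ) (u : ℤ → ℂ) (j : Kset K) :
    emb K u j = (Real.sqrt (((j : ℤ) : ℝ) ^ 2 + 1) : ℂ) * u j := rfl

lemma normH1_eq (K : ℕ) (u : ℤ → ℂ) : normH1 K u = ‖emb K u‖ := by
  rw [EuclideanSpace.norm_eq, normH1, ← Finset.sum_coe_sort (Kset K)]
  congr 1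
  refine Finset.sum_congr rfl fun j _ => ?_
  have h0 : (0:ℝ) ≤ ((j : ℤ) : ℝ) ^ 2 + 1 := by positivity
  rw [emb_apply]
  rw [norm_mul, mul_pow, Complex.norm_real,
    Real.norm_of_nonneg (Real.sqrt_nonneg _), Real.sq_sqrt h0]

lemma normH1_nonneg (K : ℕ) (u : ℤ → ℂ) : 0 ≤ normH1 K u :=
  Real.sqrt_nonneg _

lemma normH1_starK (K : ℕ) (u : ℤ → ℂ) : normH1 K (starK K u) = normH1 K u := by
  unfold normH1 starK
  congr 1
  refine Finset.sum_nbij' (fun j => if -j = (K : ℤ) then -(K : ℤ) else -j)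
    (fun j => if -j = (K : ℤ) then -(K : ℤ) else -j) ?_ ?_ ?_ ?_ ?_
  · intro j hj
    simp only [Kset, Finset.mem_Icc] at hj ⊢
    split <;> omega
  · intro j hj
    simp only [Kset, Finset.mem_Icc] at hj ⊢
    split <;> omega
  · intro j hj
    simp only [Kset, Finset.mem_Icc] at hj
    split_ifs <;> omega
  · intro j hj
    simp only [Kset, Finset.mem_Icc] at hj
    split_ifs <;> omega
  · intro j hj
    simp only [Kset, Finset.mem_Icc] at hj
    have hsq : ((if -j = (K : ℤ) then -(K : ℤ) else -j : ℤ) : ℝ) ^ 2 = ((j : ℤ) : ℝ) ^ 2 := by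
      split <;> rename_i h
      · have : j = -(K : ℤ) := by omega
        subst this; push_cast; ring
      · push_cast; ring
    rw [hsq, Complex.norm_conj]

lemma Bpow_bound (K : ℕ) (C : ℝ) (hC : 0 ≤ C)
    (hbil : ∀ u v : ℤ → ℂ, normH1 K (mulK K u v) ≤ C * normH1 K u * normH1 K v)
    (η : ℤ → ℂ) (m : ℕ) :
    normH1 K (Bpow K η m) ≤ (C ^ 2 * normH1 K η ^ 2) ^ m * normH1 K η := by
  induction m with
  | zero => simp [Bpow]
  | succ m ih =>
    have h1 : normH1 K (Bpow K η (m + 1))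
        ≤ C * normH1 K (mulK K (Bpow K η m) η) * normH1 K (starK K η) := hbil _ _
    have h2 : normH1 K (mulK K (Bpow K η m) η) ≤ C * normH1 K (Bpow K η m) * normH1 K η :=
      hbil _ _
    have hN := normH1_nonneg K η
    calc normH1 K (Bpow K η (m + 1))
        ≤ C * (C * normH1 K (Bpow K η m) * normH1 K η) * normH1 K η := by
          rw [normH1_starK] at h1
          refine h1.trans ?_
          have := mul_le_mul_of_nonneg_left h2 hC
          exact mul_le_mul_of_nonneg_right this hN
      _ = (C ^ 2 * normH1 K η ^ 2) * normH1 K (Bpow K η m) := by ring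
      _ ≤ (C ^ 2 * normH1 K η ^ 2) * ((C ^ 2 * normH1 K η ^ 2) ^ m * normH1 K η) := by
          refine mul_le_mul_of_nonneg_left ih (by positivity)
      _ = (C ^ 2 * normH1 K η ^ 2) ^ (m + 1) * normH1 K η := by ring

/-- Second bound of (eq-boundsflows): if ‖Q^K(uv)‖₁ ≤ C‖u‖₁‖v‖₁, then
‖φ_B^α(η)‖₁ ≤ exp(C²‖η‖₁²|α|)·‖η‖₁. -/
theorem stmt_10 (K : ℕ) (hK : 1 ≤ K) (C : ℝ) (hC : 0 < C)
    (hbil : ∀ u v : ℤ → ℂ, normH1 K (mulK K u v) ≤ C * normH1 K u * normH1 K v)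
    (α : ℝ) (η : ℤ → ℂ) (hη : ∀ j ∉ Kset K, η j = 0) :
    normH1 K (phiB K α η) ≤ Real.exp (C ^ 2 * (normH1 K η) ^ 2 * |α|) * normH1 K η := by
  set N := normH1 K η with hN
  have hN0 : 0 ≤ N := normH1_nonneg K η
  set c : ℕ → ℂ := fun m => (-Complex.I * (α : ℂ)) ^ m / (m.factorial : ℂ) with hc
  set x : ℕ → EuclideanSpace ℂ (Kset K) := fun m => c m • emb K (Bpow K η m) with hx
  set b : ℕ → ℝ := fun m => (C ^ 2 * N ^ 2 * |α|) ^ m / m.factorial * N with hb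
  have hcnorm : ∀ m, ‖c m‖ = |α| ^ m / m.factorial := by
    intro m
    rw [hc]
    simp only [norm_div, norm_pow, norm_mul, norm_neg, Complex.norm_I, one_mul,
      Complex.norm_real, Real.norm_eq_abs]
    norm_num [Complex.norm_natCast]
  have hxnorm : ∀ m, ‖x m‖ ≤ b m := by
    intro m
    rw [hx, hb]
    simp only [norm_smul, hcnorm m]
    rw [← normH1_eq]
    have h1 : normH1 K (Bpow K η m) ≤ (C ^ 2 * N ^ 2) ^ m * N :=
      Bpow_bound K C hC.le hbil η m
    have h2 : |α| ^ m / (m.factorial : ℝ) * ((C ^ 2 * N ^ 2) ^ m * N)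
        = (C ^ 2 * N ^ 2 * |α|) ^ m / m.factorial * N := by
      rw [mul_pow]; ring
    calc |α| ^ m / (m.factorial : ℝ) * normH1 K (Bpow K η m)
        ≤ |α| ^ m / (m.factorial : ℝ) * ((C ^ 2 * N ^ 2) ^ m * N) :=
          mul_le_mul_of_nonneg_left h1 (by positivity)
      _ = _ := h2
  have hbsum : Summable b := by
    apply Summable.mul_right
    exact Real.summable_pow_div_factorial _
  have hnormsum : Summable fun m => ‖x m‖ :=
    hbsum.of_nonneg_of_le (fun m => norm_nonneg _) hxnorm
  have hxsum : Summable x := hnormsum.of_norm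
  have hkey : emb K (phiB K α η) = ∑' m, x m := by
    have hhs := hxsum.hasSum
    refine Eq.symm ?_
    ext j
    have hcoord : HasSum (fun m => x m j) ((∑' m, x m) j) := by
      have := hhs.mapL (EuclideanSpace.proj (𝕜 := ℂ) j)
      simpa using this
    have : (fun m => x m j) = fun m =>
        (Real.sqrt (((j : ℤ) : ℝ) ^ 2 + 1) : ℂ) * (c m * Bpow K η m j) := by
      funext m
      rw [hx]
      simp only [PiLp.smul_apply, smul_eq_mul, emb_apply]
      ring
    rw [this] at hcoord
    have hsum2 : HasSum (fun m => c m * Bpow K η m j)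
        ((Real.sqrt (((j : ℤ) : ℝ) ^ 2 + 1) : ℂ)⁻¹ * ((∑' m, x m) j)) := by
      have hne : (Real.sqrt (((j : ℤ) : ℝ) ^ 2 + 1) : ℂ) ≠ 0 := by
        simp only [ne_eq, Complex.ofReal_eq_zero]
        positivity
      have := hcoord.mul_left (Real.sqrt (((j : ℤ) : ℝ) ^ 2 + 1) : ℂ)⁻¹
      simpa [← mul_assoc, inv_mul_cancel₀ hne] using this
    have hphi : phiB K α η j = (Real.sqrt (((j : ℤ) : ℝ) ^ 2 + 1) : ℂ)⁻¹ * ((∑' m, x m) j) :=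
      hsum2.tsum_eq
    rw [emb_apply, hphi, ← mul_assoc, mul_inv_cancel₀, one_mul]
    simp only [ne_eq, Complex.ofReal_eq_zero]
    positivity
  rw [normH1_eq, hkey]
  calc ‖∑' m, x m‖ ≤ ∑' m, ‖x m‖ := norm_tsum_le_tsum_norm hnormsum
    _ ≤ ∑' m, b m := Summable.tsum_le_tsum hxnorm hnormsum hbsum
    _ = Real.exp (C ^ 2 * N ^ 2 * |α|) * N := by
        rw [tsum_mul_right]
        congr 1
        rw [Real.exp_eq_exp_ℝ, NormedSpace.exp_eq_tsum_div]
end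

section
/- Under the same hypotheses (bilinear estimate ‖Q^K(uv)‖₁ ≤ C‖u‖₁‖v‖₁), the flow map φ_B^α(η) = Q^K(e^{-iα|η|²}η) satisfies the Lipschitz estimate ‖φ_B^α(η) − φ_B^α(η̃)‖₁ ≤ exp(3C² max(‖η‖₁, ‖η̃‖₁)² |α|) · ‖η − η̃‖₁ for all trigonometric polynomials η, η̃ of degree K. -/
open scoped BigOperators

noncomputable def Tmap (K : ℕ) (u : ℤ → ℂ) : EuclideanSpace ℂ (Kset K) :=
  WithLp.toLp 2 (fun j => (Real.sqrt (((j : ℤ) : ℝ) ^ 2 + 1) : ℂ) * u (j : ℤ))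

lemma normH1_eq_norm (K : ℕ) (u : ℤ → ℂ) : normH1 K u = ‖Tmap K u‖ := by
  rw [EuclideanSpace.norm_eq, normH1]
  congr 1
  rw [← Finset.sum_coe_sort (Kset K) (fun j => ((j : ℝ) ^ 2 + 1) * ‖u j‖ ^ 2)]
  refine Finset.sum_congr rfl fun j _ => ?_
  have hw : (0:ℝ) ≤ ((j : ℤ) : ℝ) ^ 2 + 1 := by positivity
  simp only [Tmap, WithLp.ofLp_toLp, norm_mul, Complex.norm_real, Real.norm_eq_abs,
    abs_of_nonneg (Real.sqrt_nonneg _), mul_pow, Real.sq_sqrt hw]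

lemma normH1_congr (K : ℕ) {u v : ℤ → ℂ} (h : ∀ j ∈ Kset K, u j = v j) :
    normH1 K u = normH1 K v := by
  unfold normH1; congr 1; exact Finset.sum_congr rfl fun j hj => by rw [h j hj]

lemma normH1_add_le (K : ℕ) (u v : ℤ → ℂ) :
    normH1 K (fun j => u j + v j) ≤ normH1 K u + normH1 K v := by
  rw [normH1_eq_norm, normH1_eq_norm, normH1_eq_norm]
  have h : Tmap K (fun j => u j + v j) = Tmap K u + Tmap K v := by
    ext j
    show _ = Tmap K u j + Tmap K v j
    simp [Tmap, mul_add]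
  rw [h]; exact norm_add_le _ _

lemma coeff_le_normH1 (K : ℕ) (u : ℤ → ℂ) {j : ℤ} (hj : j ∈ Kset K) :
    ‖u j‖ ≤ normH1 K u := by
  rw [normH1]
  rw [show ‖u j‖ = Real.sqrt (‖u j‖ ^ 2) by
    rw [Real.sqrt_sq (norm_nonneg _)]]
  apply Real.sqrt_le_sqrt
  calc ‖u j‖ ^ 2 ≤ ((j:ℝ)^2 + 1) * ‖u j‖ ^ 2 := by nlinarith [sq_nonneg ((j:ℝ)), sq_nonneg (‖u j‖)]
  _ ≤ _ := Finset.single_le_sum (f := fun i : ℤ => ((i : ℝ) ^ 2 + 1) * ‖u i‖ ^ 2)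
      (fun i _ => by positivity) hj

lemma normH1_smul (K : ℕ) (c : ℂ) (u : ℤ → ℂ) :
    normH1 K (fun j => c * u j) = ‖c‖ * normH1 K u := by
  unfold normH1
  rw [← Real.sqrt_sq (norm_nonneg c), ← Real.sqrt_mul (sq_nonneg _), Finset.mul_sum]
  congr 1
  exact Finset.sum_congr rfl fun j _ => by rw [norm_mul, mul_pow]; ring

def sigmaK (K : ℕ) (j : ℤ) : ℤ := if -j = (K : ℤ) then -(K : ℤ) else -j

lemma mulK_sub_left (K : ℕ) (u u' v : ℤ → ℂ) :
    mulK K (fun i => u i - u' i) v = fun j => mulK K u v j - mulK K u' v j := by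
  funext j
  unfold mulK
  by_cases hj : j ∈ Kset K
  · simp only [hj, if_true, ← Finset.sum_sub_distrib]
    refine Finset.sum_congr rfl fun j₁ _ => ?_
    refine Finset.sum_congr rfl fun j₂ _ => ?_
    split <;> ring
  · simp [hj]

lemma mulK_sub_right (K : ℕ) (u v v' : ℤ → ℂ) :
    mulK K u (fun i => v i - v' i) = fun j => mulK K u v j - mulK K u v' j := by
  funext j
  unfold mulK
  by_cases hj : j ∈ Kset K
  · simp only [hj, if_true, ← Finset.sum_sub_distrib]
    refine Finset.sum_congr rfl fun j₁ _ => ?_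
    refine Finset.sum_congr rfl fun j₂ _ => ?_
    split <;> ring
  · simp [hj]

lemma starK_sub (K : ℕ) (u v : ℤ → ℂ) :
    starK K (fun i => u i - v i) = fun j => starK K u j - starK K v j := by
  funext j; unfold starK; rw [map_sub]

lemma normH1_tsum_le (K : ℕ) (g : ℕ → ℤ → ℂ) (h : Summable fun m => normH1 K (g m)) :
    normH1 K (fun j => ∑' m, g m j) ≤ ∑' m, normH1 K (g m) := by
  have hnorm : Summable fun m => ‖Tmap K (g m)‖ := by
    simpa only [← normH1_eq_norm] using h
  have hT : Summable fun m => Tmap K (g m) := hnorm.of_norm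
  have key : Tmap K (fun j => ∑' m, g m j) = ∑' m, Tmap K (g m) := by
    ext j
    have hproj := (EuclideanSpace.proj j : EuclideanSpace ℂ (Kset K) →L[ℂ] ℂ).map_tsum hT
    have happ : ∀ x : EuclideanSpace ℂ (Kset K),
        (EuclideanSpace.proj j : EuclideanSpace ℂ (Kset K) →L[ℂ] ℂ) x = x j := fun x => rfl
    calc Tmap K (fun j => ∑' m, g m j) j
        = (Real.sqrt (((j : ℤ) : ℝ) ^ 2 + 1) : ℂ) * ∑' m, g m (j : ℤ) := rfl
      _ = ∑' m, (Real.sqrt (((j : ℤ) : ℝ) ^ 2 + 1) : ℂ) * g m (j : ℤ) := tsum_mul_left.symm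
      _ = ∑' m, Tmap K (g m) j := rfl
      _ = (∑' m, Tmap K (g m)) j := by
          simp only [happ] at hproj
          exact hproj.symm
  rw [normH1_eq_norm, key]
  calc ‖∑' m, Tmap K (g m)‖ ≤ ∑' m, ‖Tmap K (g m)‖ := norm_tsum_le_tsum_norm hnorm
    _ = ∑' m, normH1 K (g m) := tsum_congr fun m => (normH1_eq_norm K (g m)).symm

lemma mul_mul_le {C a b a' b' : ℝ} (hC : 0 ≤ C) (ha : a ≤ a') (hb : b ≤ b')
    (ha0 : 0 ≤ a') (hb0 : 0 ≤ b) : C * a * b ≤ C * a' * b' :=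
  mul_le_mul (mul_le_mul_of_nonneg_left ha hC) hb hb0 (mul_nonneg hC ha0)

lemma Bpow_norm_le (K : ℕ) {C : ℝ} (hC : 0 ≤ C)
    (hbil : ∀ u v : ℤ → ℂ, normH1 K (mulK K u v) ≤ C * normH1 K u * normH1 K v)
    (η : ℤ → ℂ) (m : ℕ) :
    normH1 K (Bpow K η m) ≤ C ^ (2*m) * normH1 K η ^ (2*m+1) := by
  induction m with
  | zero => simp [Bpow]
  | succ m ih =>
    have hη := normH1_nonneg K η
    have hBnn : 0 ≤ C ^ (2*m) * normH1 K η ^ (2*m+1) := by positivity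
    calc normH1 K (Bpow K η (m+1))
        ≤ C * normH1 K (mulK K (Bpow K η m) η) * normH1 K (starK K η) := hbil _ _
      _ = C * normH1 K (mulK K (Bpow K η m) η) * normH1 K η := by rw [normH1_starK]
      _ ≤ C * (C * (C ^ (2*m) * normH1 K η ^ (2*m+1)) * normH1 K η) * normH1 K η :=
          mul_mul_le hC ((hbil _ _).trans
            (mul_mul_le hC ih le_rfl hBnn hη)) le_rfl
            (mul_nonneg (mul_nonneg hC hBnn) hη) hη
      _ = C ^ (2*(m+1)) * normH1 K η ^ (2*(m+1)+1) := by ring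

lemma two_mul_add_one_le_three_pow (m : ℕ) : (2*(m:ℝ)+1) ≤ 3 ^ m := by
  induction m with
  | zero => norm_num
  | succ m ih =>
    have h1 : (1:ℝ) ≤ 3 ^ m := one_le_pow₀ (by norm_num)
    push_cast
    rw [pow_succ]
    nlinarith [ih, h1]

lemma Bpow_diff_le (K : ℕ) {C : ℝ} (hC : 0 ≤ C)
    (hbil : ∀ u v : ℤ → ℂ, normH1 K (mulK K u v) ≤ C * normH1 K u * normH1 K v)
    (η η' : ℤ → ℂ) (m : ℕ) :
    normH1 K (fun j => Bpow K η m j - Bpow K η' m j)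
      ≤ (2*(m:ℝ)+1) * (C * max (normH1 K η) (normH1 K η')) ^ (2*m)
          * normH1 K (fun j => η j - η' j) := by
  set N := max (normH1 K η) (normH1 K η') with hN
  set D := normH1 K (fun j => η j - η' j) with hD
  have hN0 : 0 ≤ N := le_trans (normH1_nonneg K η) (le_max_left _ _)
  have hD0 : 0 ≤ D := normH1_nonneg _ _
  have hηN : normH1 K η ≤ N := le_max_left _ _
  have hη'N : normH1 K η' ≤ N := le_max_right _ _
  induction m with
  | zero =>
    simp only [Bpow, Nat.cast_zero, mul_zero, pow_zero]
    norm_num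
    exact le_rfl
  | succ m ih =>
    have hBm' : normH1 K (Bpow K η' m) ≤ C^(2*m) * N^(2*m+1) :=
      (Bpow_norm_le K hC hbil η' m).trans
        (mul_le_mul_of_nonneg_left (pow_le_pow_left₀ (normH1_nonneg _ _) hη'N _) (by positivity))
    have hq1 : (0:ℝ) ≤ 2*(m:ℝ)+1 := by positivity
    have hCN : (0:ℝ) ≤ (C*N)^(2*m) := pow_nonneg (mul_nonneg hC hN0) _
    have hpow0 : (0:ℝ) ≤ C^(2*m) * N^(2*m+1) :=
      mul_nonneg (pow_nonneg hC _) (pow_nonneg hN0 _)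
    have hb1 : (0:ℝ) ≤ (2*(m:ℝ)+1) * (C*N)^(2*m) * D :=
      mul_nonneg (mul_nonneg hq1 hCN) hD0
    have hAdiff : normH1 K (fun i => mulK K (Bpow K η m) η i - mulK K (Bpow K η' m) η' i)
        ≤ C * ((2*(m:ℝ)+1) * (C*N)^(2*m) * D) * N + C * (C^(2*m) * N^(2*m+1)) * D := by
      have e : (fun i => mulK K (Bpow K η m) η i - mulK K (Bpow K η' m) η' i)
          = fun i => mulK K (fun l => Bpow K η m l - Bpow K η' m l) η i
              + mulK K (Bpow K η' m) (fun l => η l - η' l) i := by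
        funext i
        rw [congrFun (mulK_sub_left K (Bpow K η m) (Bpow K η' m) η) i,
            congrFun (mulK_sub_right K (Bpow K η' m) η η') i]
        ring
      rw [e]
      refine (normH1_add_le K _ _).trans (add_le_add ?_ ?_)
      · exact (hbil _ _).trans (mul_mul_le hC ih hηN hb1 (normH1_nonneg _ _))
      · exact (hbil _ _).trans (mul_mul_le hC hBm' le_rfl hpow0 hD0)
    have hA'bound : normH1 K (mulK K (Bpow K η' m) η') ≤ C * (C^(2*m) * N^(2*m+1)) * N :=
      (hbil _ _).trans (mul_mul_le hC hBm' hη'N hpow0 (normH1_nonneg _ _))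
    have hsdiff : normH1 K (fun i => starK K η i - starK K η' i) = D := by
      rw [← starK_sub, normH1_starK]
    have e2 : (fun j => Bpow K η (m+1) j - Bpow K η' (m+1) j)
        = fun j => mulK K (fun i => mulK K (Bpow K η m) η i - mulK K (Bpow K η' m) η' i)
              (starK K η) j
            + mulK K (mulK K (Bpow K η' m) η') (fun i => starK K η i - starK K η' i) j := by
      funext j
      show mulK K (mulK K (Bpow K η m) η) (starK K η) j
          - mulK K (mulK K (Bpow K η' m) η') (starK K η') j = _
      rw [congrFun (mulK_sub_left K (mulK K (Bpow K η m) η) (mulK K (Bpow K η' m) η')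
            (starK K η)) j,
          congrFun (mulK_sub_right K (mulK K (Bpow K η' m) η') (starK K η) (starK K η')) j]
      ring
    rw [e2]
    have hAdnn : 0 ≤ C * ((2*(m:ℝ)+1) * (C*N)^(2*m) * D) * N + C * (C^(2*m) * N^(2*m+1)) * D :=
      add_nonneg (mul_nonneg (mul_nonneg hC hb1) hN0)
        (mul_nonneg (mul_nonneg hC hpow0) hD0)
    have s1 : normH1 K (mulK K (fun i => mulK K (Bpow K η m) η i - mulK K (Bpow K η' m) η' i)
          (starK K η))
        ≤ C * (C * ((2*(m:ℝ)+1) * (C*N)^(2*m) * D) * N + C * (C^(2*m) * N^(2*m+1)) * D) * N := by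
      refine (hbil _ _).trans ?_
      rw [normH1_starK]
      exact mul_mul_le hC hAdiff hηN hAdnn (normH1_nonneg _ _)
    have s2 : normH1 K (mulK K (mulK K (Bpow K η' m) η')
          (fun i => starK K η i - starK K η' i))
        ≤ C * (C * (C^(2*m) * N^(2*m+1)) * N) * D := by
      refine (hbil _ _).trans ?_
      rw [hsdiff]
      exact mul_mul_le hC hA'bound le_rfl
        (mul_nonneg (mul_nonneg hC hpow0) hN0) hD0
    calc normH1 K (fun j =>
          mulK K (fun i => mulK K (Bpow K η m) η i - mulK K (Bpow K η' m) η' i) (starK K η) j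
          + mulK K (mulK K (Bpow K η' m) η') (fun i => starK K η i - starK K η' i) j)
        ≤ _ + _ := (normH1_add_le K _ _).trans (add_le_add s1 s2)
      _ = (2*((m:ℝ)+1)+1) * (C*N)^(2*(m+1)) * D := by ring
      _ = (2*((m+1:ℕ):ℝ)+1) * (C*N)^(2*(m+1)) * D := by push_cast; ring

lemma abs_coef (α : ℝ) (m : ℕ) :
    ‖(-Complex.I * (α : ℂ)) ^ m / (m.factorial : ℂ)‖ = |α| ^ m / m.factorial := by
  rw [norm_div, norm_pow, norm_mul]
  simp [Complex.norm_real, Complex.norm_natCast]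

lemma summable_coef (K : ℕ) {C : ℝ} (hC : 0 ≤ C)
    (hbil : ∀ u v : ℤ → ℂ, normH1 K (mulK K u v) ≤ C * normH1 K u * normH1 K v)
    (α : ℝ) (η : ℤ → ℂ) {j : ℤ} (hj : j ∈ Kset K) :
    Summable (fun m : ℕ => ((-Complex.I * (α : ℂ)) ^ m / (m.factorial : ℂ)) * Bpow K η m j) := by
  have hηnn := normH1_nonneg K η
  apply Summable.of_norm
  refine Summable.of_nonneg_of_le (fun m => norm_nonneg _) (fun m => ?_)
    ((Real.summable_pow_div_factorial (C^2 * normH1 K η ^2 * |α|)).mul_right (normH1 K η))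
  rw [norm_mul, abs_coef]
  calc |α| ^ m / m.factorial * ‖Bpow K η m j‖
      ≤ |α| ^ m / m.factorial * (C ^ (2*m) * normH1 K η ^ (2*m+1)) := by
        apply mul_le_mul_of_nonneg_left _ (by positivity)
        exact (coeff_le_normH1 K _ hj).trans (Bpow_norm_le K hC hbil η m)
    _ = (C^2 * normH1 K η ^2 * |α|)^m / m.factorial * normH1 K η := by
        rw [mul_pow, mul_pow, ← pow_mul, ← pow_mul]
        ring


/-- Lipschitz estimate for the flow φ_B^α (proof of Lemma 11): if ‖Q^K(uv)‖₁ ≤ C‖u‖₁‖v‖₁, then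
‖φ_B^α(η) − φ_B^α(η̃)‖₁ ≤ exp(3C² max(‖η‖₁,‖η̃‖₁)²|α|)·‖η − η̃‖₁. -/
theorem stmt_11 (K : ℕ) (hK : 1 ≤ K) (C : ℝ) (hC : 0 < C)
    (hbil : ∀ u v : ℤ → ℂ, normH1 K (mulK K u v) ≤ C * normH1 K u * normH1 K v)
    (α : ℝ) (η η' : ℤ → ℂ) (hη : ∀ j ∉ Kset K, η j = 0) (hη' : ∀ j ∉ Kset K, η' j = 0) :
    normH1 K (fun j => phiB K α η j - phiB K α η' j) ≤
      Real.exp (3 * C ^ 2 * (max (normH1 K η) (normH1 K η')) ^ 2 * |α|) *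
        normH1 K (fun j => η j - η' j) := by
  have hC0 : 0 ≤ C := hC.le
  set M := max (normH1 K η) (normH1 K η') with hM
  set D := normH1 K (fun j => η j - η' j) with hD
  set x := 3 * C ^ 2 * M ^ 2 * |α| with hx
  have hM0 : 0 ≤ M := le_trans (normH1_nonneg K η) (le_max_left _ _)
  have hD0 : 0 ≤ D := normH1_nonneg _ _
  set g : ℕ → ℤ → ℂ := fun m j =>
    ((-Complex.I * (α : ℂ)) ^ m / (m.factorial : ℂ)) * (Bpow K η m j - Bpow K η' m j) with hg
  have hgb : ∀ m, normH1 K (g m) ≤ x ^ m / m.factorial * D := by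
    intro m
    have h1 : normH1 K (g m)
        = ‖(-Complex.I * (α : ℂ)) ^ m / (m.factorial : ℂ)‖
          * normH1 K (fun j => Bpow K η m j - Bpow K η' m j) := normH1_smul K _ _
    rw [h1, abs_coef]
    calc |α| ^ m / m.factorial * normH1 K (fun j => Bpow K η m j - Bpow K η' m j)
        ≤ |α| ^ m / m.factorial * ((2*(m:ℝ)+1) * (C * M) ^ (2*m) * D) :=
          mul_le_mul_of_nonneg_left (Bpow_diff_le K hC0 hbil η η' m) (by positivity)
      _ ≤ |α| ^ m / m.factorial * ((3:ℝ)^m * (C * M) ^ (2*m) * D) := by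
          apply mul_le_mul_of_nonneg_left _ (by positivity)
          apply mul_le_mul_of_nonneg_right _ hD0
          exact mul_le_mul_of_nonneg_right (two_mul_add_one_le_three_pow m)
            (pow_nonneg (mul_nonneg hC0 hM0) _)
      _ = x ^ m / m.factorial * D := by
          rw [hx, mul_pow, mul_pow, mul_pow, mul_pow, ← pow_mul, ← pow_mul]
          ring
  have hsumx : Summable (fun m : ℕ => x ^ m / m.factorial * D) :=
    (Real.summable_pow_div_factorial x).mul_right D
  have hsum : Summable (fun m => normH1 K (g m)) :=
    Summable.of_nonneg_of_le (fun m => normH1_nonneg _ _) hgb hsumx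
  have hφ : ∀ j ∈ Kset K, phiB K α η j - phiB K α η' j = ∑' m, g m j := by
    intro j hj
    have h1 := summable_coef K hC0 hbil α η hj
    have h2 := summable_coef K hC0 hbil α η' hj
    show (∑' m, ((-Complex.I * (α : ℂ)) ^ m / (m.factorial : ℂ)) * Bpow K η m j)
        - (∑' m, ((-Complex.I * (α : ℂ)) ^ m / (m.factorial : ℂ)) * Bpow K η' m j) = _
    rw [← Summable.tsum_sub h1 h2]
    exact tsum_congr fun m => (mul_sub _ _ _).symm
  calc normH1 K (fun j => phiB K α η j - phiB K α η' j)
      = normH1 K (fun j => ∑' m, g m j) := normH1_congr K hφ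
    _ ≤ ∑' m, normH1 K (g m) := normH1_tsum_le K g hsum
    _ ≤ ∑' m : ℕ, x ^ m / m.factorial * D := Summable.tsum_le_tsum hgb hsum hsumx
    _ = (∑' m : ℕ, x ^ m / m.factorial) * D := tsum_mul_right
    _ = Real.exp x * D := by
        rw [Real.exp_eq_exp_ℝ, NormedSpace.exp_eq_tsum_div]
end

section
/- Consider a numerical recursion ψ^{n+1} = Φ(ψ^n) in H¹(𝕋) where one step Φ is a composition of s substeps, each substep being either norm-preserving (‖φ_A^α(η)‖₁ = ‖η‖₁) or satisfying ‖φ_B^{bh}(η)‖₁ ≤ exp(C²‖η‖₁²|b|h)‖η‖₁ with |b| ≤ b_max. If ‖ψ⁰‖₁ ≤ ε and ε is small enough that exp(4C²ε²·b_max·s·(1+εh)) ≤ 2 (interpreting the condition as in the paper), then ‖ψ^n‖₁ ≤ 2ε for all n with nh ≤ ε^{-1}. -/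
open scoped BigOperators

private lemma foldl_norm_bound {V : Type*} [NormedAddCommGroup V] (ε K : ℝ)
    (hε : 0 < ε) (hK : 0 ≤ K) :
    ∀ (l : List (V → V)),
      (∀ f ∈ l, ∀ η : V, ‖η‖ ≤ 2 * ε → ‖f η‖ ≤ Real.exp K * ‖η‖) →
      ∀ (a : ℝ) (x : V), ‖x‖ ≤ Real.exp a * ε →
        Real.exp (a + K * l.length) ≤ 2 →
        ‖l.foldl (fun x f => f x) x‖ ≤ Real.exp (a + K * l.length) * ε := by
  intro l
  induction l with
  | nil =>
      intro _ a x hx h2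
      simpa using hx
  | cons f t ih =>
      intro hl a x hx h2
      have hlen : ((f :: t).length : ℝ) = (t.length : ℝ) + 1 := by push_cast [List.length_cons]; ring
      have h2' : Real.exp (a + K + K * t.length) ≤ 2 := by
        have : a + K + K * t.length = a + K * (f :: t).length := by rw [hlen]; ring
        rwa [this]
      have hx2ε : ‖x‖ ≤ 2 * ε := by
        have ha : a ≤ a + K * (f :: t).length := by
          have : (0:ℝ) ≤ K * (f :: t).length := mul_nonneg hK (by positivity)
          linarith
        calc ‖x‖ ≤ Real.exp a * ε := hx
          _ ≤ Real.exp (a + K * (f :: t).length) * ε :=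
              mul_le_mul_of_nonneg_right (Real.exp_le_exp.mpr ha) hε.le
          _ ≤ 2 * ε := mul_le_mul_of_nonneg_right h2 hε.le
      have hfx : ‖f x‖ ≤ Real.exp (a + K) * ε := by
        have h1 : ‖f x‖ ≤ Real.exp K * ‖x‖ := hl f List.mem_cons_self x hx2ε
        calc ‖f x‖ ≤ Real.exp K * ‖x‖ := h1
          _ ≤ Real.exp K * (Real.exp a * ε) :=
              mul_le_mul_of_nonneg_left hx (Real.exp_pos K).le
          _ = Real.exp (a + K) * ε := by rw [Real.exp_add]; ring
      have hl' : ∀ g ∈ t, ∀ η : V, ‖η‖ ≤ 2 * ε → ‖g η‖ ≤ Real.exp K * ‖η‖ :=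
        fun g hg => hl g (List.mem_cons_of_mem f hg)
      have := ih hl' (a + K) (f x) hfx h2'
      have heq : a + K + K * t.length = a + K * (f :: t).length := by rw [hlen]; ring
      rw [heq] at this
      simpa using this

/-- Part (a) of Lemma 10: a splitting step is a composition of s substeps, each either
norm-preserving or with exponentially controlled norm growth; then ‖ψ⁰‖₁ ≤ ε and the
smallness condition exp(4C²ε·b_max·s·(1+εh)) ≤ 2 imply ‖ψⁿ‖₁ ≤ 2ε for nh ≤ ε⁻¹. -/
theorem stmt_12 {V : Type*} [NormedAddCommGroup V]
    (s : ℕ) (hs : 1 ≤ s) (C h ε bmax : ℝ) (hh : 0 < h) (hε : 0 < ε)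
    (φ : Fin s → V → V) (b : Fin s → ℝ) (hb : ∀ r, |b r| ≤ bmax)
    (hstep : ∀ r, (∀ η, ‖φ r η‖ = ‖η‖) ∨
      (∀ η, ‖φ r η‖ ≤ Real.exp (C ^ 2 * ‖η‖ ^ 2 * |b r| * h) * ‖η‖))
    (ψ : ℕ → V)
    (hrec : ∀ n, ψ (n + 1) = (List.ofFn φ).foldl (fun x f => f x) (ψ n))
    (hinit : ‖ψ 0‖ ≤ ε)
    (hsmall : Real.exp (4 * C ^ 2 * ε * bmax * (s : ℝ) * (1 + ε * h)) ≤ 2) :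
    ∀ n : ℕ, (n : ℝ) * h ≤ ε⁻¹ → ‖ψ n‖ ≤ 2 * ε := by
  have hbmax : 0 ≤ bmax := le_trans (abs_nonneg _) (hb ⟨0, hs⟩)
  set K : ℝ := 4 * C ^ 2 * ε ^ 2 * bmax * h with hKdef
  have hK : 0 ≤ K := by positivity
  -- key: if m*h ≤ ε⁻¹ then exp(K * (s*m)) ≤ 2
  have hkey : ∀ m : ℕ, (m : ℝ) * h ≤ ε⁻¹ → Real.exp (K * (s * m)) ≤ 2 := by
    intro m hm
    have hεm : ε * ((m : ℝ) * h) ≤ 1 := by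
      calc ε * ((m : ℝ) * h) ≤ ε * ε⁻¹ := by
            exact mul_le_mul_of_nonneg_left hm hε.le
        _ = 1 := mul_inv_cancel₀ hε.ne'
    have hexp : K * (s * m) ≤ 4 * C ^ 2 * ε * bmax * (s : ℝ) * (1 + ε * h) := by
      have h1 : K * ((s:ℝ) * m) = (4 * C ^ 2 * ε * bmax * (s : ℝ)) * (ε * ((m : ℝ) * h)) := by
        rw [hKdef]; ring
      have h2 : (0:ℝ) ≤ 4 * C ^ 2 * ε * bmax * (s : ℝ) := by positivity
      have h3 : (0:ℝ) ≤ ε * h := by positivity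
      nlinarith [mul_le_mul_of_nonneg_left hεm h2]
    exact le_trans (Real.exp_le_exp.mpr hexp) hsmall
  -- each substep grows norm by at most exp K while norm ≤ 2ε
  have hsub : ∀ f ∈ List.ofFn φ, ∀ η : V, ‖η‖ ≤ 2 * ε → ‖f η‖ ≤ Real.exp K * ‖η‖ := by
    intro f hf η hη
    obtain ⟨r, rfl⟩ := List.mem_ofFn.mp hf
    rcases hstep r with hpres | hgrow
    · rw [hpres η]
      have : (1:ℝ) ≤ Real.exp K := Real.one_le_exp hK
      nlinarith [norm_nonneg η]
    · refine le_trans (hgrow η) (mul_le_mul_of_nonneg_right ?_ (norm_nonneg η))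
      apply Real.exp_le_exp.mpr
      have hbr := hb r
      have hbr0 : 0 ≤ |b r| := abs_nonneg _
      have hη0 : 0 ≤ ‖η‖ := norm_nonneg η
      have hη2 : ‖η‖ ^ 2 ≤ 4 * ε ^ 2 := by nlinarith
      rw [hKdef]
      nlinarith [mul_le_mul_of_nonneg_left hbr (by positivity : (0:ℝ) ≤ C ^ 2 * ‖η‖ ^ 2),
        mul_le_mul_of_nonneg_left hη2 (by positivity : (0:ℝ) ≤ C ^ 2 * bmax), hh.le]
  -- main claim by induction
  have hclaim : ∀ n : ℕ, (n : ℝ) * h ≤ ε⁻¹ → ‖ψ n‖ ≤ Real.exp (K * (s * n)) * ε := by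
    intro n
    induction n with
    | zero =>
        intro _
        simpa using hinit
    | succ n ih =>
        intro hn1
        have hn : (n : ℝ) * h ≤ ε⁻¹ := by
          have : (n : ℝ) * h ≤ ((n : ℝ) + 1) * h := by nlinarith
          push_cast at hn1
          linarith
        have hψn := ih hn
        have h2 : Real.exp (K * (s * n) + K * (List.ofFn φ).length) ≤ 2 := by
          have hlen : ((List.ofFn φ).length : ℝ) = (s : ℝ) := by
            rw [List.length_ofFn]
          rw [hlen]
          have : K * ((s:ℝ) * n) + K * (s:ℝ) = K * ((s:ℝ) * ((n:ℝ)+1)) := by ring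
          rw [this]
          have := hkey (n + 1) (by push_cast; push_cast at hn1; linarith)
          simpa [Nat.cast_succ] using this
        have := foldl_norm_bound ε K hε hK (List.ofFn φ) hsub (K * (s * n)) (ψ n) hψn h2
        rw [← hrec n] at this
        have hlen : ((List.ofFn φ).length : ℝ) = (s : ℝ) := by rw [List.length_ofFn]
        rw [hlen] at this
        have heq : K * ((s:ℝ) * n) + K * (s:ℝ) = K * ((s:ℝ) * ((n:ℕ)+1 : ℕ)) := by
          push_cast; ring
        rw [heq] at this
        exact this
  intro n hn
  have h1 := hclaim n hn
  have h2 := hkey n hn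
  calc ‖ψ n‖ ≤ Real.exp (K * (s * n)) * ε := h1
    _ ≤ 2 * ε := mul_le_mul_of_nonneg_right h2 hε.le
end
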